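/- arXiv:2408.16011 — 2 statements merged into one kernel-verified Lean document; each statement's English description precedes it below -/
import Mathlib

section
/- For each fixed t ≥ 0, standard Brownian motion is almost surely not differentiable at t: P(ω : s ↦ B(s,ω) is differentiable at t) = 0. -/
/-!
If `s ↦ B s ω` is differentiable at `t`, then `|B (t + h) ω - B t ω| ≤ C h` for some integer `C`
and all small `h > 0`. The increment `B (t + h) - B t` is `𝒩(0, h)`, whose density is at most
`(2πh)^{-1/2}`, so this event has probability `O(C √h)`, which tends to `0`; a countable union
over `C` and over the sequence `h = 1/(n+1)` then has measure zero.
-/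

open MeasureTheory ProbabilityTheory Filter Set

noncomputable section

structure IsStdBM {Ω : Type*} [MeasurableSpace Ω] (P : Measure Ω) (B : ℝ → Ω → ℝ) : Prop where
  meas : ∀ t, Measurable (B t)
  start : ∀ ω, B 0 ω = 0
  cont : ∀ ω, Continuous fun t => B t ω
  indep : ∀ (n : ℕ) (t : Fin (n + 1) → ℝ), (∀ i, 0 ≤ t i) → Monotone t →
      iIndepFun
        (fun i : Fin n => fun ω => B (t i.succ) ω - B (t i.castSucc) ω) P
  gauss : ∀ s t : ℝ, 0 ≤ s → s ≤ t →
      P.map (fun ω => B t ω - B s ω) = gaussianReal 0 (t - s).toNNReal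

open Real Topology
open scoped NNReal ENNReal

namespace ProbabilityTheory

lemma gaussianPDFReal_le (μ : ℝ) (v : ℝ≥0) (x : ℝ) :
    gaussianPDFReal μ v x ≤ (√(2 * π * v))⁻¹ := by
  rw [gaussianPDFReal]
  refine mul_le_of_le_one_right (by positivity) (exp_le_one_iff.2 ?_)
  exact div_nonpos_of_nonpos_of_nonneg (neg_nonpos.2 (sq_nonneg _)) (by positivity)

lemma gaussianReal_Icc_le (μ : ℝ) {v : ℝ≥0} (hv : v ≠ 0) (a b : ℝ) :
    gaussianReal μ v (Icc a b) ≤ ENNReal.ofReal ((b - a) / √(2 * π * v)) := by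
  rw [gaussianReal_apply μ hv]
  calc ∫⁻ x in Icc a b, gaussianPDF μ v x
      ≤ ∫⁻ _ in Icc a b, ENNReal.ofReal (√(2 * π * v))⁻¹ :=
        lintegral_mono fun x => ENNReal.ofReal_le_ofReal (gaussianPDFReal_le μ v x)
    _ = ENNReal.ofReal ((b - a) / √(2 * π * v)) := by
        rw [setLIntegral_const, Real.volume_Icc, ← ENNReal.ofReal_mul (by positivity),
          div_eq_inv_mul]

lemma measure_abs_le_le_of_map_eq_gaussianReal {Ω : Type*} [MeasurableSpace Ω] {P : Measure Ω}
    {X : Ω → ℝ} (hX : Measurable X) {v : ℝ≥0} (hv : v ≠ 0) (hXv : P.map X = gaussianReal 0 v)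
    (a : ℝ) : P {ω | |X ω| ≤ a} ≤ ENNReal.ofReal (2 * a / √(2 * π * v)) := by
  have h_preimage : {ω | |X ω| ≤ a} = X ⁻¹' Icc (-a) a := by ext; simp [abs_le]
  rw [h_preimage, ← Measure.map_apply hX measurableSet_Icc, hXv, two_mul, ← sub_neg_eq_add]
  exact gaussianReal_Icc_le 0 hv _ _

end ProbabilityTheory

lemma DifferentiableAt.exists_nat_eventually_abs_sub_le {f : ℝ → ℝ} {t : ℝ}
    (hf : DifferentiableAt ℝ f t) {u : ℕ → ℝ} (hu : Tendsto u atTop (𝓝 0)) :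
    ∃ C : ℕ, ∀ᶠ n in atTop, |f (t + u n) - f t| ≤ C * |u n| := by
  obtain ⟨c, hc⟩ := hf.hasDerivAt.isBigO_sub.bound
  have h_shift : Tendsto (fun n => t + u n) atTop (𝓝 t) := by
    simpa using tendsto_const_nhds.add hu
  refine ⟨⌈c⌉₊, (h_shift.eventually hc).mono fun n hn => ?_⟩
  simp only [Real.norm_eq_abs, add_sub_cancel_left] at hn
  exact hn.trans (mul_le_mul_of_nonneg_right (Nat.le_ceil c) (abs_nonneg _))

lemma MeasureTheory.measure_setOf_eventually_null {α : Type*} [MeasurableSpace α]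
    {μ : Measure α} {s : ℕ → Set α} (hs : Tendsto (fun n => μ (s n)) atTop (𝓝 0)) :
    μ {x | ∀ᶠ n in atTop, x ∈ s n} = 0 := by
  simp only [eventually_atTop, ofPred_exists, ofPred_forall]
  refine measure_iUnion_null fun N => le_antisymm ?_ bot_le
  refine ge_of_tendsto hs (eventually_atTop.2 ⟨N, fun n hn => measure_mono ?_⟩)
  exact iInter₂_subset n hn

namespace IsStdBM

variable {Ω : Type*} [MeasurableSpace Ω] {P : Measure Ω} {B : ℝ → Ω → ℝ}

lemma measure_abs_sub_le_le (hB : IsStdBM P B) {t : ℝ} (ht : 0 ≤ t) {h : ℝ} (hh : 0 < h)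
    (a : ℝ) : P {ω | |B (t + h) ω - B t ω| ≤ a} ≤ ENNReal.ofReal (2 * a / √(2 * π * h)) := by
  have h_law := hB.gauss t (t + h) ht (by linarith)
  rw [add_sub_cancel_left] at h_law
  simpa [hh.le] using measure_abs_le_le_of_map_eq_gaussianReal ((hB.meas _).sub (hB.meas t))
    (by simpa using hh) h_law a

lemma tendsto_measure_abs_sub_le_mul (hB : IsStdBM P B) {t : ℝ} (ht : 0 ≤ t) (C : ℝ) :
    Tendsto (fun h => P {ω | |B (t + h) ω - B t ω| ≤ C * h}) (𝓝[>] 0) (𝓝 0) := by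
  have h_bound : Tendsto (fun h => ENNReal.ofReal (2 * C / √(2 * π) * √h)) (𝓝[>] 0) (𝓝 0) := by
    have h_cont : Continuous fun h : ℝ => ENNReal.ofReal (2 * C / √(2 * π) * √h) :=
      ENNReal.continuous_ofReal.comp (by fun_prop)
    simpa using (h_cont.tendsto 0).mono_left nhdsWithin_le_nhds
  refine tendsto_of_tendsto_of_tendsto_of_le_of_le' tendsto_const_nhds h_bound
    (.of_forall fun _ => zero_le) ?_
  filter_upwards [self_mem_nhdsWithin] with h (hh : 0 < h)
  refine (hB.measure_abs_sub_le_le ht hh _).trans_eq (congrArg ENNReal.ofReal ?_)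
  rw [sqrt_mul' _ hh.le]
  field_simp
  rw [sq_sqrt hh.le]

end IsStdBM

theorem not_differentiable_at_fixed_time_general
    {Ω : Type*} [MeasurableSpace Ω] (P : Measure Ω)
    (B : ℝ → Ω → ℝ) (hB : IsStdBM P B) (t : ℝ) (ht : 0 ≤ t) :
    P {ω | DifferentiableAt ℝ (fun s => B s ω) t} = 0 := by
  set h : ℕ → ℝ := fun n => 1 / ((n : ℝ) + 1)
  have h_pos : ∀ n, 0 < h n := fun n => by positivity
  have h_tendsto : Tendsto h atTop (𝓝[>] 0) :=
    tendsto_nhdsWithin_iff.2 ⟨tendsto_one_div_add_atTop_nhds_zero_nat, .of_forall h_pos⟩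
  let E : ℕ → ℕ → Set Ω := fun C n => {ω | |B (t + h n) ω - B t ω| ≤ C * h n}
  have h_sub : {ω | DifferentiableAt ℝ (fun s => B s ω) t} ⊆
      ⋃ C, {ω | ∀ᶠ n in atTop, ω ∈ E C n} := by
    intro ω hω
    obtain ⟨C, hC⟩ :=
      hω.exists_nat_eventually_abs_sub_le (tendsto_nhds_of_tendsto_nhdsWithin h_tendsto)
    exact mem_iUnion.2 ⟨C, hC.mono fun n hn => by simpa [E, abs_of_pos (h_pos n)] using hn⟩
  exact measure_mono_null h_sub <| measure_iUnion_null fun C =>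
    measure_setOf_eventually_null ((hB.tendsto_measure_abs_sub_le_mul ht C).comp h_tendsto)

/-- For each fixed `t ≥ 0`, standard Brownian motion is almost surely not
differentiable at `t`. -/
theorem not_differentiable_at_fixed_time
    {Ω : Type*} [MeasurableSpace Ω] (P : Measure Ω) [IsProbabilityMeasure P]
    (B : ℝ → Ω → ℝ) (hB : IsStdBM P B) (t : ℝ) (ht : 0 ≤ t) :
    P {ω | DifferentiableAt ℝ (fun s => B s ω) t} = 0 :=
  not_differentiable_at_fixed_time_general P B hB t ht
end
end

section
/- If B is differentiable at some point s ∈ (0,1] with the event D_s, then the event D = ⋃_{s∈(0,1]} D_s is contained in Γ = ⋃_{m≥1} liminf_{n→∞} D_{mn}, where D_{mn} = ⋃_{k=1}^{n−2} ⋂_{j=k}^{k+2} { |B(j/n) − B((j−1)/n)| ≤ 3m/n }. -/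
open MeasureTheory Set

set_option maxHeartbeats 800000 in
/-- If a process with continuous paths is differentiable at some `s ∈ (0,1]`,
then the corresponding sample point lies in
`Γ = ⋃_{m≥1} liminf_n D_{mn}` where
`D_{mn} = ⋃_{k=1}^{n-2} ⋂_{j=k}^{k+2} {|B(j/n) - B((j-1)/n)| ≤ 3m/n}`. -/
theorem differentiable_subset_Gamma
    {Ω : Type*} (B : ℝ → Ω → ℝ) (hcont : ∀ ω, Continuous fun t => B t ω) :
    {ω | ∃ s ∈ Set.Ioc (0 : ℝ) 1, DifferentiableAt ℝ (fun u => B u ω) s} ⊆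
      ⋃ (m : ℕ) (_ : 1 ≤ m), ⋃ (l : ℕ), ⋂ (n : ℕ) (_ : l ≤ n),
        ⋃ (k : ℕ) (_ : k ∈ Finset.Icc 1 (n - 2)),
          ⋂ (j : ℕ) (_ : j ∈ Finset.Icc k (k + 2)),
            {ω | |B ((j : ℝ) / n) ω - B (((j : ℝ) - 1) / n) ω| ≤ 3 * m / n} := by
  intro ω hω
  obtain ⟨s, ⟨hs0, hs1⟩, hdiff⟩ := hω
  set f : ℝ → ℝ := fun u => B u ω with hf
  obtain ⟨C, hC⟩ := hdiff.isBigO_sub.bound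
  rw [Metric.eventually_nhds_iff] at hC
  obtain ⟨δ, hδpos, hδ⟩ := hC
  set m : ℕ := ⌈2 * |C|⌉₊ + 1 with hm
  have hmC : 2 * |C| ≤ (m : ℝ) := by
    calc 2 * |C| ≤ (⌈2 * |C|⌉₊ : ℝ) := Nat.le_ceil _
    _ ≤ m := by exact_mod_cast Nat.le_succ _
  refine mem_iUnion.2 ⟨m, mem_iUnion.2 ⟨Nat.le_add_left 1 _, ?_⟩⟩
  refine mem_iUnion.2 ⟨max 3 (⌈3 / δ⌉₊ + 1), ?_⟩
  refine mem_iInter.2 fun n => mem_iInter.2 fun hn => ?_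
  have hn3 : 3 ≤ n := le_trans (le_max_left _ _) hn
  have hnpos : (0 : ℝ) < n := by exact_mod_cast (by omega : 0 < n)
  have hδn : 3 / (n : ℝ) < δ := by
    have h1 : 3 / δ < (n : ℝ) := by
      calc 3 / δ < (⌈3 / δ⌉₊ + 1 : ℕ) := by
            push_cast; linarith [Nat.le_ceil (3 / δ)]
        _ ≤ (n : ℝ) := by exact_mod_cast le_trans (le_max_right _ _) hn
    rw [div_lt_iff₀ hnpos]
    rw [div_lt_iff₀ hδpos] at h1
    linarith
  set k : ℕ := min (⌈(n : ℝ) * s⌉₊) (n - 2) with hk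
  have hns0 : 0 < (n : ℝ) * s := by positivity
  have hk1 : 1 ≤ k := le_min (Nat.one_le_ceil_iff.2 hns0) (by omega)
  -- (k - 1)/n ≤ s ≤ (k + 2)/n
  have hkub : (k : ℝ) - 1 ≤ (n : ℝ) * s := by
    have h1 : (k : ℝ) ≤ (⌈(n : ℝ) * s⌉₊ : ℝ) := by
      exact_mod_cast min_le_left _ _
    have h2 : (⌈(n : ℝ) * s⌉₊ : ℝ) < (n : ℝ) * s + 1 := Nat.ceil_lt_add_one hns0.le
    linarith
  have hklb : (n : ℝ) * s ≤ (k : ℝ) + 2 := by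
    rcases min_le_iff.mp (le_refl k) with _ | _
    all_goals {
      rcases le_or_gt (⌈(n : ℝ) * s⌉₊) (n - 2) with h | h
      · have : k = ⌈(n : ℝ) * s⌉₊ := by omega
        rw [this]
        calc (n : ℝ) * s ≤ (⌈(n : ℝ) * s⌉₊ : ℝ) := Nat.le_ceil _
          _ ≤ _ := by linarith
      · have hkeq : k = n - 2 := by omega
        have : ((k : ℝ) + 2) = (n : ℝ) := by
          rw [hkeq]; push_cast [Nat.cast_sub (by omega : 2 ≤ n)]; ring
        rw [this]
        nlinarith }
  refine mem_iUnion.2 ⟨k, mem_iUnion.2 ⟨Finset.mem_Icc.2 ⟨hk1, min_le_right _ _⟩, ?_⟩⟩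
  refine mem_iInter.2 fun j => mem_iInter.2 fun hj => ?_
  obtain ⟨hjk, hjk2⟩ := Finset.mem_Icc.mp hj
  -- key estimate
  have key : ∀ t : ℝ, ((k : ℝ) - 1) / n ≤ t → t ≤ ((k : ℝ) + 2) / n →
      |f t - f s| ≤ |C| * (3 / n) := by
    intro t ht1 ht2
    have hslb : ((k : ℝ) - 1) / n ≤ s := by
      rw [div_le_iff₀ hnpos]; nlinarith
    have hsub : s ≤ ((k : ℝ) + 2) / n := by
      rw [le_div_iff₀ hnpos]; nlinarith
    have habs : |t - s| ≤ 3 / n := by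
      rw [abs_le]
      constructor
      · have : ((k : ℝ) - 1) / n - ((k : ℝ) + 2) / n = -(3 / n) := by ring
        linarith [this ▸ sub_le_sub ht1 hsub]
      · have : ((k : ℝ) + 2) / n - ((k : ℝ) - 1) / n = 3 / n := by ring
        linarith [this ▸ sub_le_sub ht2 hslb]
    have hdist : dist t s < δ := by
      rw [Real.dist_eq]; linarith
    have h1 := hδ hdist
    simp only [Real.norm_eq_abs] at h1
    calc |f t - f s| ≤ C * |t - s| := h1
      _ ≤ |C| * |t - s| := by
          have := le_abs_self C
          nlinarith [abs_nonneg (t - s)]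
      _ ≤ |C| * (3 / n) := by
          have := abs_nonneg C
          nlinarith
  have hj1 : ((k : ℝ) - 1) / n ≤ ((j : ℝ) - 1) / n := by
    have : (k : ℝ) ≤ j := by exact_mod_cast hjk
    gcongr <;> linarith
  have hj2 : ((j : ℝ) - 1) / n ≤ ((k : ℝ) + 2) / n := by
    have : (j : ℝ) ≤ (k : ℝ) + 2 := by exact_mod_cast hjk2
    gcongr <;> linarith
  have hj3 : ((k : ℝ) - 1) / n ≤ (j : ℝ) / n := by
    have : (k : ℝ) ≤ j := by exact_mod_cast hjk
    gcongr <;> linarith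
  have hj4 : (j : ℝ) / n ≤ ((k : ℝ) + 2) / n := by
    have : (j : ℝ) ≤ (k : ℝ) + 2 := by exact_mod_cast hjk2
    gcongr
  have h1 := key ((j : ℝ) / n) hj3 hj4
  have h2 := key (((j : ℝ) - 1) / n) hj1 hj2
  simp only [mem_setOf_eq]
  have hexpand : B ((j : ℝ) / n) ω - B (((j : ℝ) - 1) / n) ω
      = (f ((j : ℝ) / n) - f s) - (f (((j : ℝ) - 1) / n) - f s) := by
    simp only [hf]; ring
  rw [hexpand]
  calc |(f ((j : ℝ) / n) - f s) - (f (((j : ℝ) - 1) / n) - f s)|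
      ≤ |f ((j : ℝ) / n) - f s| + |f (((j : ℝ) - 1) / n) - f s| := abs_sub _ _
    _ ≤ |C| * (3 / n) + |C| * (3 / n) := add_le_add h1 h2
    _ = 6 * |C| / n := by ring
    _ ≤ 3 * m / n := by
        rw [div_le_div_iff₀ hnpos hnpos]
        nlinarith
end
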